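/- For t = diag(1_a, −1_b, 1, −1_b, 1_a) ∈ SO_{2n+1} with a + b = n, the trace of the adjoint action of t on the Lie algebra of SO_{2n+1} equals 2(a−b)^2 + 2(a−b) − n. -/

import Mathlib

open Matrix

/-- The antidiagonal matrix `J` of size `2n+1` with ones on the antidiagonal (0-indexed),
realizing the symmetric bilinear form defining `SO_{2n+1}`. -/
def antidiagJ (K : Type*) [Field K] (n : ℕ) :
    Matrix (Fin (2 * n + 1)) (Fin (2 * n + 1)) K :=
  fun i j => if (i : ℕ) + (j : ℕ) = 2 * n then 1 else 0

/-- The linear map `A ↦ A + J Aᵀ J`, whose kernel is the Lie algebra of `SO_{2n+1}`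
(the condition `A + J Aᵀ J⁻¹ = 0`, using `J⁻¹ = J`). -/
noncomputable def soDefMap (K : Type*) [Field K] (n : ℕ) :
    Matrix (Fin (2 * n + 1)) (Fin (2 * n + 1)) K →ₗ[K]
      Matrix (Fin (2 * n + 1)) (Fin (2 * n + 1)) K :=
  LinearMap.id +
    (LinearMap.mulLeft K (antidiagJ K n)).comp
      ((LinearMap.mulRight K (antidiagJ K n)).comp
        (Matrix.transposeLinearEquiv (Fin (2 * n + 1)) (Fin (2 * n + 1)) K K).toLinearMap)

/-- The Lie algebra of `SO_{2n+1}`: matrices `A` with `A + J Aᵀ J⁻¹ = 0`,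
equivalently `a_{ij} + a_{N+1-j, N+1-i} = 0` for `N = 2n+1` (1-indexed). -/
noncomputable def soLie (K : Type*) [Field K] (n : ℕ) :
    Submodule K (Matrix (Fin (2 * n + 1)) (Fin (2 * n + 1)) K) :=
  LinearMap.ker (soDefMap K n)

/-- The diagonal torus element `t = diag(1_a, −1_b, 1, −1_b, 1_a)` (where `a + b = n`). -/
def torusElt (K : Type*) [Field K] (n a b : ℕ) :
    Matrix (Fin (2 * n + 1)) (Fin (2 * n + 1)) K :=
  Matrix.diagonal fun i =>
    if (i : ℕ) < a then (1 : K)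
    else if (i : ℕ) < n then -1
    else if (i : ℕ) = n then 1
    else if (i : ℕ) ≤ n + b then -1
    else 1

/-!
The orthogonal Lie algebra is the `-1`-eigenspace of the involution `σ A = J Aᵀ J`, and
conjugation `C` by `t` commutes with `σ`. As `½(1 - σ)` projects onto this eigenspace, the trace
of `C` on it is the trace of `C ∘ ½(1 - σ)` on all matrices, i.e. `½(tr C - tr (C σ))`.
On all matrices `tr C = (tr t)² = (2(a - b) + 1)²`, while
`tr (C σ) = tr (t J (J t)ᵀ) = tr (t² J²) = 2n + 1`.
-/

namespace LinearMap

variable {K V : Type*} [Field K] [AddCommGroup V] [Module K V] [FiniteDimensional K V]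

theorem trace_restrict_ker_one_add_eq {σ C : Module.End K V} (h2 : (2 : K) ≠ 0)
    (hσ : σ * σ = 1) (hC : Commute C σ) (f : Module.End K (ker (1 + σ)))
    (hf : ∀ x, (f x : V) = C x) :
    trace K _ f = 2⁻¹ * (trace K V C - trace K V (C * σ)) := by
  set π : Module.End K V := (2⁻¹ : K) • (1 - σ)
  have hπ : (1 + σ) * π = 0 := by
    have : (1 + σ) * (1 - σ) = 0 := by noncomm_ring [hσ]
    rw [mul_smul_comm, this, smul_zero]
  have hπ_id : ∀ x ∈ ker (1 + σ), π x = x := fun x hx => by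
    have hσx : σ x = -x := eq_neg_of_add_eq_zero_right (by simpa using hx)
    simp [π, hσx, ← two_smul K x, smul_smul, inv_mul_cancel₀ h2]
  have hCπ_mem : ∀ x, (C * π) x ∈ ker (1 + σ) := fun x => by
    have hC' : Commute C (1 + σ) := (Commute.one_right C).add_right hC
    have : (1 + σ) * (C * π) = 0 := by rw [← mul_assoc, ← hC'.eq, mul_assoc, hπ, mul_zero]
    exact congr($this x)
  have hf_eq : f = (C * π).restrict fun x _ => hCπ_mem x := by
    ext x
    simp [hf, hπ_id x x.2]
  rw [hf_eq, trace_restrict_eq_of_forall_mem _ _ hCπ_mem]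
  simp only [π, mul_smul_comm, mul_sub, mul_one, map_smul, map_sub, smul_eq_mul]

end LinearMap

namespace Matrix

variable {R m : Type*} [CommRing R] [Fintype m] [DecidableEq m]

theorem mul_single_one_mul_apply (P Q : Matrix m m R) (i j k l : m) :
    (P * single i j (1 : R) * Q) k l = P k i * Q j l := by
  simp [mul_apply, single_apply, ite_and]

theorem trace_end_eq_sum_apply_single (f : Module.End R (Matrix m m R)) :
    LinearMap.trace R _ f = ∑ i, ∑ j, f (single i j 1) i j := by
  rw [LinearMap.trace_eq_matrix_trace R (stdBasis R m m), trace, Fintype.sum_prod_type]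
  simp [LinearMap.toMatrix_apply, stdBasis, single_eq_of_single_single]

theorem trace_mulLeft_comp_mulRight (P Q : Matrix m m R) :
    LinearMap.trace R _ (LinearMap.mulLeft R P ∘ₗ LinearMap.mulRight R Q) =
      P.trace * Q.trace := by
  simp [trace_end_eq_sum_apply_single, ← Matrix.mul_assoc, mul_single_one_mul_apply, trace,
    Finset.sum_mul_sum]

theorem trace_mulLeft_comp_mulRight_comp_transpose (P Q : Matrix m m R) :
    LinearMap.trace R _ (LinearMap.mulLeft R P ∘ₗ LinearMap.mulRight R Q ∘ₗ
      (transposeLinearEquiv m m R R).toLinearMap) = (P * Qᵀ).trace := by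
  simp only [trace_end_eq_sum_apply_single, LinearMap.comp_apply, LinearMap.mulLeft_apply,
    LinearMap.mulRight_apply, LinearEquiv.coe_coe, transposeLinearEquiv_apply,
    AddEquiv.toFun_eq_coe, transposeAddEquiv_apply, transpose_single, ← Matrix.mul_assoc,
    mul_single_one_mul_apply]
  simp [trace, mul_apply]

noncomputable def transposeConj (J : Matrix m m R) : Module.End R (Matrix m m R) :=
  LinearMap.mulLeft R J ∘ₗ LinearMap.mulRight R J ∘ₗ
    (transposeLinearEquiv m m R R).toLinearMap

theorem transposeConj_apply (J A : Matrix m m R) : transposeConj J A = J * (Aᵀ * J) := rfl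

theorem transposeConj_mul_self {J : Matrix m m R} (hJ : Jᵀ = J) (hJJ : J * J = 1) :
    transposeConj J * transposeConj J = 1 := by
  ext1 A
  simp only [Module.End.mul_apply, transposeConj_apply, transpose_mul, transpose_transpose, hJ,
    ← Matrix.mul_assoc, hJJ, Matrix.one_mul]
  simp [Matrix.mul_assoc, hJJ]

theorem commute_conj_transposeConj {P J : Matrix m m R} (hP : Pᵀ = P) (hPJ : Commute P J) :
    Commute (LinearMap.mulLeft R P ∘ₗ LinearMap.mulRight R P) (transposeConj J) := by
  ext1 A
  simp only [Module.End.mul_apply, LinearMap.comp_apply, LinearMap.mulLeft_apply,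
    LinearMap.mulRight_apply, transposeConj_apply, transpose_mul, hP, ← Matrix.mul_assoc,
    hPJ.eq]
  simp only [Matrix.mul_assoc, hPJ.eq]

theorem trace_conj_mul_transposeConj {P J : Matrix m m R} (hP : Pᵀ = P) (hJ : Jᵀ = J)
    (hPJ : Commute P J) :
    LinearMap.trace R _ ((LinearMap.mulLeft R P ∘ₗ LinearMap.mulRight R P) * transposeConj J) =
      (P * P * (J * J)).trace := by
  have : (LinearMap.mulLeft R P ∘ₗ LinearMap.mulRight R P) * transposeConj J =
      LinearMap.mulLeft R (P * J) ∘ₗ LinearMap.mulRight R (J * P) ∘ₗ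
        (transposeLinearEquiv m m R R).toLinearMap := by
    ext1 A
    simp [transposeConj_apply, Matrix.mul_assoc]
  rw [this, trace_mulLeft_comp_mulRight_comp_transpose, transpose_mul, hP, hJ, Matrix.mul_assoc,
    ← Matrix.mul_assoc J, ← hPJ.eq]
  simp only [Matrix.mul_assoc]

end Matrix

section OrthogonalLieAlgebra

variable {K : Type*} [Field K] {n : ℕ}

theorem antidiagJ_apply (i j : Fin (2 * n + 1)) :
    antidiagJ K n i j = if j = i.rev then 1 else 0 := by
  have := i.isLt
  simp only [antidiagJ, Fin.ext_iff, Fin.val_rev]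
  exact if_congr (by omega) rfl rfl

theorem antidiagJ_mul_apply (M : Matrix (Fin (2 * n + 1)) (Fin (2 * n + 1)) K)
    (i j : Fin (2 * n + 1)) : (antidiagJ K n * M) i j = M i.rev j := by
  simp [mul_apply, antidiagJ_apply]

theorem transpose_antidiagJ : (antidiagJ K n)ᵀ = antidiagJ K n := by
  ext i j
  simp [antidiagJ, Nat.add_comm]

theorem mul_antidiagJ_apply (M : Matrix (Fin (2 * n + 1)) (Fin (2 * n + 1)) K)
    (i j : Fin (2 * n + 1)) : (M * antidiagJ K n) i j = M i j.rev := by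
  rw [← transpose_apply (M * _), transpose_mul, transpose_antidiagJ, antidiagJ_mul_apply,
    transpose_apply]

theorem antidiagJ_mul_self : antidiagJ K n * antidiagJ K n = 1 := by
  ext i j
  simp [antidiagJ_mul_apply, antidiagJ_apply, one_apply, eq_comm]

theorem transpose_torusElt (a b : ℕ) : (torusElt K n a b)ᵀ = torusElt K n a b :=
  diagonal_transpose _

theorem torusElt_mul_self (a b : ℕ) : torusElt K n a b * torusElt K n a b = 1 := by
  rw [torusElt, diagonal_mul_diagonal, ← diagonal_one]
  congr 1
  ext i
  split_ifs <;> simp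

theorem commute_torusElt_antidiagJ {a b : ℕ} (hab : a + b = n) :
    Commute (torusElt K n a b) (antidiagJ K n) := by
  ext i j
  rw [mul_antidiagJ_apply, antidiagJ_mul_apply, torusElt, diagonal_apply, diagonal_apply]
  have := i.isLt
  simp only [Fin.ext_iff, Fin.rev]
  split_ifs <;> first | rfl | omega

theorem trace_torusElt {a b : ℕ} (hab : a + b = n) :
    (torusElt K n a b).trace = 2 * ((a : K) - b) + 1 := by
  subst hab
  rw [torusElt, trace_diagonal, Fin.sum_univ_eq_sum_range (fun i => if i < a then (1 : K)
    else if i < a + b then -1 else if i = a + b then 1 else if i ≤ a + b + b then -1 else 1),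
    show 2 * (a + b) + 1 = a + b + 1 + b + a by ring]
  simp only [Finset.sum_range_add, Finset.sum_range_one]
  rw [Finset.sum_eq_card_nsmul (b := 1), Finset.sum_eq_card_nsmul (b := -1),
    Finset.sum_eq_card_nsmul (b := -1), Finset.sum_eq_card_nsmul (b := 1)]
  · simp
    ring
  all_goals
    intro i hi
    rw [Finset.mem_range] at hi
    split_ifs <;> first | rfl | omega

end OrthogonalLieAlgebra

/-- For `t = diag(1_a, −1_b, 1, −1_b, 1_a) ∈ SO_{2n+1}` with `a + b = n`,
the trace of the adjoint action of `t` (i.e. `A ↦ t A t⁻¹ = t A t`) on the Lie algebra of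
`SO_{2n+1}` equals `2(a−b)² + 2(a−b) − n`. -/
theorem stmt2 (K : Type*) [Field K] [CharZero K] (n a b : ℕ) (hab : a + b = n)
    (Ad : soLie K n →ₗ[K] soLie K n)
    (hAd : ∀ A : soLie K n,
      (↑(Ad A) : Matrix (Fin (2 * n + 1)) (Fin (2 * n + 1)) K) =
        torusElt K n a b * (↑A : Matrix (Fin (2 * n + 1)) (Fin (2 * n + 1)) K) *
          torusElt K n a b) :
    LinearMap.trace K ↥(soLie K n) Ad =
      2 * ((a : K) - (b : K)) ^ 2 + 2 * ((a : K) - (b : K)) - (n : K) := by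
  have htJ := commute_torusElt_antidiagJ (K := K) hab
  have hσ := transposeConj_mul_self (transpose_antidiagJ (K := K) (n := n)) antidiagJ_mul_self
  have hC := commute_conj_transposeConj (transpose_torusElt a b) htJ
  -- `soLie K n` is by definition `ker (1 + transposeConj (antidiagJ K n))`
  refine (LinearMap.trace_restrict_ker_one_add_eq two_ne_zero hσ hC Ad
    fun A => (hAd A).trans (Matrix.mul_assoc _ _ _)).trans ?_
  rw [trace_mulLeft_comp_mulRight, trace_conj_mul_transposeConj (transpose_torusElt a b)
      transpose_antidiagJ htJ, torusElt_mul_self, antidiagJ_mul_self, Matrix.mul_one, trace_one,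
    Fintype.card_fin, trace_torusElt hab, ← hab]
  push_cast
  ring
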